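/- Let L be a non-contractible compact metric ANR, X a non-empty compact Fréchet space, Y a non-empty compact space, and B a closed subspace of X. Let z ∈ H(μ) ⊆ Z(X,Y) be any point such that c = π_X(z) ∈ B and L-Ind_{c+} B ≥ 1. If L-Ind_{b+} X ≥ α for each b ∈ B, then L-Ind_{z+} Z(X,Y) ≥ min{α, L-Ind Y} + 1. -/

import Mathlib

open Set Topology Cardinal

noncomputable section

attribute [local instance] Classical.propDecidable

/-- Values of dimension functions: `⊥ : WithBot Ordinal.{0}` encodes `−1`,
ordinals are the usual values, and `⊤` encodes `∞`. -/
abbrev Dim : Type 1 := WithTop (WithBot Ordinal.{0})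

/-- An ordinal viewed as a dimension value. -/
def Dim.ofOrdinal (a : Ordinal.{0}) : Dim := ((a : WithBot Ordinal.{0}) : Dim)

/-- The dimension value `−1`. -/
def Dim.minusOne : Dim := ((⊥ : WithBot Ordinal.{0}) : Dim)

/-- An integer `m ≥ −1` viewed as a dimension value. -/
def Dim.ofInt (m : ℤ) : Dim := if 0 ≤ m then Dim.ofOrdinal m.toNat else Dim.minusOne

/-- `A` is a `K`-tuple for the simplicial complex `K` on the vertex set `Fin m`:
whenever the members indexed by a nonempty `I` have a common point, `I` spans a
simplex of `K`. -/
def IsKTuple {m : ℕ} (K : Finset (Fin m) → Prop) {X : Type} (A : Fin m → Set X) : Prop :=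
  ∀ I : Finset (Fin m), I.Nonempty → (⋂ i ∈ I, A i).Nonempty → K I

/-- `K` is an abstract (finite) simplicial complex with vertex set `Fin m`:
it is closed under passing to nonempty subsets, and contains every vertex. -/
def IsComplex {m : ℕ} (K : Finset (Fin m) → Prop) : Prop :=
  (∀ s t : Finset (Fin m), s ⊆ t → s.Nonempty → K t → K s) ∧ ∀ i, K {i}

/-- The boundary complex `∂Δ^k` of the `k`-simplex: all proper subsets of the
`k+1` vertices span simplices. -/
def bComplex (k : ℕ) : Finset (Fin (k + 1)) → Prop := fun s => s ≠ Finset.univ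

/-- `U` is an (open) `K`-neighbourhood of the tuple `F`. -/
def KNbhd {m : ℕ} (K : Finset (Fin m) → Prop) {X : Type} [TopologicalSpace X]
    (F U : Fin m → Set X) : Prop :=
  (∀ i, IsOpen (U i)) ∧ IsKTuple K U ∧ ∀ i, F i ⊆ U i

/-- Auxiliary form of `K-Ind X ≤ α`, defined by transfinite recursion on `α`:
every closed `K`-tuple has a `K`-neighbourhood whose corresponding `K`-partition
is either empty (dimension `−1`) or has `K-Ind < α`. -/
def KIndLeAux {m : ℕ} (K : Finset (Fin m) → Prop) :
    Ordinal.{0} → ∀ X : Type, TopologicalSpace X → Prop :=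
  (wellFounded_lt (α := Ordinal.{0})).fix fun α rec X tX =>
    letI := tX
    ∀ F : Fin m → Set X, (∀ i, IsClosed (F i)) → IsKTuple K F →
      ∃ U : Fin m → Set X, (∀ i, IsOpen (U i)) ∧ IsKTuple K U ∧ (∀ i, F i ⊆ U i) ∧
        ((⋃ i, U i)ᶜ = (∅ : Set X) ∨
          ∃ β : Set.Iio α, rec β.1 β.2 (↥((⋃ i, U i)ᶜ)) inferInstance)

/-- `K-Ind X ≤ α` (for an ordinal `α ≥ 0`). -/
def KIndLE {m : ℕ} (K : Finset (Fin m) → Prop) (X : Type) [tX : TopologicalSpace X]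
    (α : Ordinal.{0}) : Prop :=
  KIndLeAux K α X tX

/-- Fedorchuk's inductive dimension `K-Ind` modulo a simplicial complex `K`;
`−1` for the empty space, the least `α` with `K-Ind X ≤ α` otherwise, `∞` if none. -/
def KInd {m : ℕ} (K : Finset (Fin m) → Prop) (X : Type) [TopologicalSpace X] : Dim :=
  if IsEmpty X then Dim.minusOne
  else if ∃ α, KIndLE K X α then Dim.ofOrdinal (sInf {α | KIndLE K X α}) else ⊤

/-- The set of `K`-obstruction points of an open `K`-tuple `U`: points covered
by no `K`-neighbourhood of `U`. -/
def KObs {m : ℕ} (K : Finset (Fin m) → Prop) {X : Type} [TopologicalSpace X]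
    (U : Fin m → Set X) : Set X :=
  {x | ¬ ∃ V : Fin m → Set X, KNbhd K U V ∧ x ∈ ⋃ i, V i}

/-- `X` is strongly `α`-dimensional: `K-Ind X` is a positive ordinal `α` and some
closed `K`-tuple admits no `K`-neighbourhood `U` without obstruction points whose
corresponding `K`-partition has `K-Ind < α`. -/
def KStrongly {m : ℕ} (K : Finset (Fin m) → Prop) (X : Type) [TopologicalSpace X] : Prop :=
  (∃ α : Ordinal.{0}, 0 < α ∧ KInd K X = Dim.ofOrdinal α) ∧
  ∃ F : Fin m → Set X, (∀ i, IsClosed (F i)) ∧ IsKTuple K F ∧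
    ∀ U : Fin m → Set X, KNbhd K F U →
      KInd K (↥((⋃ i, U i)ᶜ)) < KInd K X → KObs K U ≠ ∅

/-- The dimensional strength degree `K-str X ∈ {0,1}`. -/
def KStr {m : ℕ} (K : Finset (Fin m) → Prop) (X : Type) [TopologicalSpace X] : ℕ :=
  if KStrongly K X then 1 else 0

/-- `K-dim X ≤ n`: any `n+1` closed `K`-tuples admit `K`-partitions with empty
intersection. -/
def KDimLE {m : ℕ} (K : Finset (Fin m) → Prop) (X : Type) [TopologicalSpace X] (n : ℕ) : Prop :=
  ∀ F : Fin (n + 1) → Fin m → Set X,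
    (∀ j i, IsClosed (F j i)) → (∀ j, IsKTuple K (F j)) →
    ∃ U : Fin (n + 1) → Fin m → Set X, (∀ j, KNbhd K (F j) (U j)) ∧
      (⋂ j, (⋃ i, U j i)ᶜ) = (∅ : Set X)

/-- Fedorchuk's dimension `K-dim` modulo a simplicial complex `K`. -/
def KDim {m : ℕ} (K : Finset (Fin m) → Prop) (X : Type) [TopologicalSpace X] : Dim :=
  if IsEmpty X then Dim.minusOne
  else if ∃ n, KDimLE K X n then Dim.ofOrdinal ((sInf {n | KDimLE K X n} : ℕ) : Ordinal.{0}) else ⊤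

/-- `dim X ≤ n` for the Lebesgue covering dimension: every finite open cover has
an open shrinking of order at most `n+1`. -/
def CovDimLE (X : Type) [TopologicalSpace X] (n : ℕ) : Prop :=
  ∀ (ι : Type), Finite ι → ∀ U : ι → Set X, (∀ i, IsOpen (U i)) → (⋃ i, U i) = Set.univ →
    ∃ V : ι → Set X, (∀ i, IsOpen (V i)) ∧ (∀ i, V i ⊆ U i) ∧ (⋃ i, V i) = Set.univ ∧
      ∀ x : X, ({i | x ∈ V i}).ncard ≤ n + 1

/-- The Lebesgue covering dimension. -/
def covDim (X : Type) [TopologicalSpace X] : Dim :=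
  if IsEmpty X then Dim.minusOne
  else if ∃ n, CovDimLE X n then Dim.ofOrdinal ((sInf {n | CovDimLE X n} : ℕ) : Ordinal.{0}) else ⊤

/-- `Ind X ≤ n` for the large inductive dimension, by recursion on `n`. -/
def IndLE : ℕ → ∀ X : Type, TopologicalSpace X → Prop
  | 0, X, tX =>
    letI := tX
    ∀ F U : Set X, IsClosed F → IsOpen U → F ⊆ U →
      ∃ V : Set X, IsOpen V ∧ F ⊆ V ∧ V ⊆ U ∧ frontier V = ∅
  | n + 1, X, tX =>
    letI := tX
    ∀ F U : Set X, IsClosed F → IsOpen U → F ⊆ U →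
      ∃ V : Set X, IsOpen V ∧ F ⊆ V ∧ V ⊆ U ∧ IndLE n (↥(frontier V)) inferInstance

/-- The large inductive dimension `Ind`. -/
def IndDim (X : Type) [tX : TopologicalSpace X] : Dim :=
  if IsEmpty X then Dim.minusOne
  else if ∃ n, IndLE n X tX then Dim.ofOrdinal ((sInf {n | IndLE n X tX} : ℕ) : Ordinal.{0}) else ⊤

/-- The relation generating the topological join `A ∗ B`: the copy of `B` is
collapsed at parameter `0`, the copy of `A` at parameter `1`. -/
def JoinRel (A B : Type) : (A × B × unitInterval) → (A × B × unitInterval) → Prop :=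
  fun p q => (p.2.2 = 0 ∧ q.2.2 = 0 ∧ p.1 = q.1) ∨ (p.2.2 = 1 ∧ q.2.2 = 1 ∧ p.2.1 = q.2.1)

/-- The topological join `A ∗ B`. -/
abbrev Join (A B : Type) [TopologicalSpace A] [TopologicalSpace B] : Type :=
  Quot (JoinRel A B)

/-- Auxiliary construction of the join of `n+1` copies of `L`, bundled with its
topology. -/
def JoinPowAux (L : Type) (tL : TopologicalSpace L) : ℕ → (T : Type) × TopologicalSpace T
  | 0 => ⟨L, tL⟩
  | n + 1 =>
    let p := JoinPowAux L tL n
    letI := tL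
    letI := p.2
    ⟨Join L p.1, inferInstance⟩

/-- The join `L ∗ ⋯ ∗ L` of `n+1` copies of `L`. -/
def JoinPow (L : Type) [tL : TopologicalSpace L] (n : ℕ) : Type :=
  (JoinPowAux L tL n).1

instance joinPowTopologicalSpace (L : Type) [tL : TopologicalSpace L] (n : ℕ) :
    TopologicalSpace (JoinPow L n) :=
  (JoinPowAux L tL n).2

/-- `L-dim X ≤ n`: every continuous map from a closed subset of `X` to the join
of `n+1` copies of `L` extends continuously over `X`. -/
def LDimLE (L : Type) [TopologicalSpace L] (X : Type) [TopologicalSpace X] (n : ℕ) : Prop :=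
  ∀ F : Set X, IsClosed F → ∀ f : C(F, JoinPow L n),
    ∃ g : C(X, JoinPow L n), ∀ x : F, g x = f x

/-- Fedorchuk's dimension `L-dim` modulo an ANR `L`. -/
def LDim (L : Type) [TopologicalSpace L] (X : Type) [TopologicalSpace X] : Dim :=
  if IsEmpty X then Dim.minusOne
  else if ∃ n, LDimLE L X n then Dim.ofOrdinal ((sInf {n | LDimLE L X n} : ℕ) : Ordinal.{0}) else ⊤

/-- Auxiliary form of `L-Ind X ≤ α`, by transfinite recursion on `α`: every map
to `L` from a closed subset of `X` has an `L`-partition which is either empty or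
has `L-Ind < α`. -/
def LIndLeAux (L : Type) [TopologicalSpace L] :
    Ordinal.{0} → ∀ X : Type, TopologicalSpace X → Prop :=
  (wellFounded_lt (α := Ordinal.{0})).fix fun α rec X tX =>
    letI := tX
    ∀ F : Set X, IsClosed F → ∀ f : C(F, L),
      ∃ U : Set X, IsOpen U ∧ ∃ hFU : F ⊆ U,
        (∃ g : C(U, L), ∀ (x : X) (hx : x ∈ F), g ⟨x, hFU hx⟩ = f ⟨x, hx⟩) ∧
        (Uᶜ = (∅ : Set X) ∨ ∃ β : Set.Iio α, rec β.1 β.2 (↥(Uᶜ)) inferInstance)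

/-- `L-Ind X ≤ α` (for an ordinal `α ≥ 0`). -/
def LIndLE (L : Type) [TopologicalSpace L] (X : Type) [tX : TopologicalSpace X]
    (α : Ordinal.{0}) : Prop :=
  LIndLeAux L α X tX

/-- Fedorchuk's inductive dimension `L-Ind` modulo an ANR `L`. -/
def LInd (L : Type) [TopologicalSpace L] (X : Type) [TopologicalSpace X] : Dim :=
  if IsEmpty X then Dim.minusOne
  else if ∃ α, LIndLE L X α then Dim.ofOrdinal (sInf {α | LIndLE L X α}) else ⊤

/-- `L` is an absolute neighbourhood retract (for metric spaces): `L` is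
metrizable and whenever a closed subset `A` of a metric space is homeomorphic to
`L` via `e`, the map `e` extends continuously over a neighbourhood of `A`. -/
def IsANR (L : Type) [TopologicalSpace L] : Prop :=
  TopologicalSpace.MetrizableSpace L ∧
  ∀ (M : Type) [MetricSpace M], ∀ A : Set M, IsClosed A → ∀ e : A ≃ₜ L,
    ∃ U : Set M, IsOpen U ∧ ∃ hAU : A ⊆ U, ∃ r : C(U, L),
      ∀ (a : M) (ha : a ∈ A), r ⟨a, hAU ha⟩ = e ⟨a, ha⟩

/-- `L-Ind_{b+} X`: the least dimension value `d` such that some open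
neighbourhood of `b` has closure of `L-Ind` at most `d`. -/
def LIndPlus (L : Type) [TopologicalSpace L] {X : Type} [TopologicalSpace X] (b : X) : Dim :=
  sInf {d : Dim | ∃ U : Set X, IsOpen U ∧ b ∈ U ∧ LInd L (↥(closure U)) ≤ d}

/-- The set `K(X) = {b ∈ X : L-Ind_{b+} X = L-Ind X}`. -/
def LKset (L : Type) [TopologicalSpace L] (X : Type) [TopologicalSpace X] : Set X :=
  {b | LIndPlus L b = LInd L X}

/-- The weight of a topological space: the least cardinality of a basis. -/
def tWeight (X : Type) [TopologicalSpace X] : Cardinal :=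
  sInf {c | ∃ B : Set (Set X), TopologicalSpace.IsTopologicalBasis B ∧ #B = c}

/-- The family `𝒮_X` of all subsets of `X` that are finite or homeomorphic to the
one-point compactification `A_{ℵ₀}` of a countably infinite discrete space. -/
def SFam (X : Type) [TopologicalSpace X] : Set (Set X) :=
  {S | S.Finite ∨ Nonempty (↥S ≃ₜ OnePoint ℕ)}

/-- The relation generating the quotient `N` in the `Z(X,Y)` construction:
each set `{μ} × {x} × Y` is collapsed to a point. -/
def ZRel (ι X Y : Type) : (OnePoint ι × X × Y) → (OnePoint ι × X × Y) → Prop :=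
  fun p q => p.1 = OnePoint.infty ∧ q.1 = OnePoint.infty ∧ p.2.1 = q.2.1

/-- The quotient space `N` of `A_𝔪 × X × Y`. -/
abbrev ZQuot (ι X Y : Type) [TopologicalSpace ι] [TopologicalSpace X] [TopologicalSpace Y] :
    Type :=
  Quot (ZRel ι X Y)

/-- The subset `Z(X,Y) = ⋃_{α ∈ A_𝔪} H(α)` of `N`:  `H(μ) = π₁({μ} × X × Y)` and
`H(α) = π₁({α} × φ(α) × Y)` for `α ≠ μ`. -/
def ZSet (ι X Y : Type) [TopologicalSpace ι] [TopologicalSpace X] [TopologicalSpace Y]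
    (φ : ι → Set X) : Set (ZQuot ι X Y) :=
  {z | ∃ p : OnePoint ι × X × Y, Quot.mk (ZRel ι X Y) p = z ∧
        (p.1 = OnePoint.infty ∨ ∃ i : ι, p.1 = (i : OnePoint ι) ∧ p.2.1 ∈ φ i)}

/-- The space `Z(X,Y)` (for the data `ι`, `φ`), with the subspace topology. -/
abbrev ZSpace (ι X Y : Type) [TopologicalSpace ι] [TopologicalSpace X] [TopologicalSpace Y]
    (φ : ι → Set X) : Type :=
  ↥(ZSet ι X Y φ)

/-- The subset `H(μ)` of `Z(X,Y)`. -/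
def ZHmu (ι X Y : Type) [TopologicalSpace ι] [TopologicalSpace X] [TopologicalSpace Y]
    (φ : ι → Set X) : Set (ZSpace ι X Y φ) :=
  {z | ∃ (x : X) (y : Y), (z : ZQuot ι X Y) = Quot.mk (ZRel ι X Y) (OnePoint.infty, x, y)}

/-- The projection `π_X : N → X`, `π₁(α,x,y) ↦ x`. -/
def ZQuotProjX {ι X Y : Type} [TopologicalSpace ι] [TopologicalSpace X] [TopologicalSpace Y] :
    ZQuot ι X Y → X :=
  Quot.lift (fun p => p.2.1) (fun _ _ h => h.2.2)

/-- The projection `π_X : Z(X,Y) → X`. -/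
def ZProjX {ι X Y : Type} [TopologicalSpace ι] [TopologicalSpace X] [TopologicalSpace Y]
    (φ : ι → Set X) : ZSpace ι X Y φ → X :=
  fun z => ZQuotProjX (z : ZQuot ι X Y)

/-- The cardinality requirements on the index set `ι` (of cardinality `𝔪`) in the
`Z(X,Y)` construction: `𝔪 ≥ max {ℵ₀, (wX)⁺, (wY)⁺, card 𝒮_X}`. -/
def ZCardOK (X Y ι : Type) [TopologicalSpace X] [TopologicalSpace Y] : Prop :=
  ℵ₀ ≤ #ι ∧ tWeight X < #ι ∧ tWeight Y < #ι ∧ #(SFam X) ≤ #ι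

/-- The requirements on `φ : A_𝔪 \ {μ} → 𝒮_X`: it takes values in `𝒮_X` and every
fibre has cardinality `𝔪`. -/
def ZPhiOK {X ι : Type} [TopologicalSpace X] (φ : ι → Set X) : Prop :=
  (∀ i, φ i ∈ SFam X) ∧ ∀ S ∈ SFam X, #(↥(φ ⁻¹' {S})) = #ι


/-!
Fix an open `U ∋ z` and an `L`-partition `P` of `cl U` for a map which, read on the copy
`H(μ) ≅ X`, does not extend over a closed neighbourhood `E` of `c` in `B`; such a map exists
because `L-Ind_{c+} B ≥ 1`. Let `V₁ ⊆ X` be the points near `c` whose copy in `H(μ)` lies in the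
domain of the extension `g` given by the partition. If some `b ∈ E` is not in `cl V₁`, then `P`
contains a copy of the closure of a neighbourhood of `b`, of `L-Ind ≥ α`. Otherwise `g` has no limit
along `V₁` at some `x ∈ E`, since else it would extend over `E`. In a Fréchet space this
oscillation is witnessed by a sequence converging to `x`, i.e. by a set `S ∈ 𝒮_X`. Among the `𝔪`
indices `i` with `φ i = S`, the tube lemma at the countably many points of `S` excludes only
countably many, and for the remaining `i` the whole fibre `π₁({i} × {x} × Y)` is a limit of
points where `g` oscillates, hence lies in `P`; so `P` contains a copy of `Y`.
-/

open Filter Function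

theorem Topology.IsEmbedding.continuousOn_extend {A T L : Type*} [TopologicalSpace A]
    [TopologicalSpace T] [TopologicalSpace L] {e : A → T} (he : IsEmbedding e) {g : A → L}
    (hg : Continuous g) (j : T → L) : ContinuousOn (extend e g j) (range e) := by
  rw [continuousOn_iff_continuous_domRestrict]
  convert hg.comp he.toHomeomorph.symm.continuous using 1
  ext ⟨_, a, rfl⟩
  have : he.toHomeomorph.symm ⟨e a, a, rfl⟩ = a := he.toHomeomorph.symm_apply_apply a
  simp [this, he.injective.extend_apply]

theorem exists_isClosed_disjoint_frequently_of_not_tendsto {α L : Type*} [TopologicalSpace L]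
    [CompactSpace L] [T2Space L] {l : Filter α} [l.NeBot] {f : α → L}
    (h : ¬∃ a, Tendsto f l (𝓝 a)) :
    ∃ N₀ N₁ : Set L, IsClosed N₀ ∧ IsClosed N₁ ∧ Disjoint N₀ N₁ ∧
      (∃ᶠ t in l, f t ∈ N₀) ∧ ∃ᶠ t in l, f t ∈ N₁ := by
  obtain ⟨a₀, ha₀⟩ := exists_clusterPt_of_compactSpace (map f l)
  obtain ⟨a₁, ha₁, hne⟩ : ∃ a₁, MapClusterPt a₁ l f ∧ a₁ ≠ a₀ := by
    by_contra! hall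
    exact h ⟨a₀, tendsto_nhds_of_unique_mapClusterPt hall⟩
  obtain ⟨N₁, ⟨hN₁, hN₁c⟩, N₀, ⟨hN₀, hN₀c⟩, hdisj⟩ :=
    ((closed_nhds_basis a₁).disjoint_iff (closed_nhds_basis a₀)).1 (disjoint_nhds_nhds.2 hne)
  exact ⟨N₀, N₁, hN₀c, hN₁c, hdisj.symm, ha₀.frequently hN₀, ha₁.frequently hN₁⟩

theorem exists_countable_subset_finite_diff_nhds {X : Type*} [TopologicalSpace X]
    [FrechetUrysohnSpace X] {A : Set X} {x : X} (hx : x ∈ closure A) :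
    ∃ R ⊆ A, R.Countable ∧ x ∈ closure R ∧ ∀ N ∈ 𝓝 x, (R \ N).Finite := by
  obtain ⟨u, huA, hux⟩ := mem_closure_iff_seq_limit.1 hx
  refine ⟨range u, range_subset_iff.2 huA, countable_range u,
    mem_closure_of_tendsto hux (Eventually.of_forall mem_range_self), fun N hN => ?_⟩
  have hfin : {k | u k ∉ N}.Finite := by
    rw [← eventually_cofinite, Nat.cofinite_eq_atTop]
    exact hux hN
  exact (hfin.image u).subset (by rintro _ ⟨⟨k, rfl⟩, hk⟩; exact ⟨k, hk, rfl⟩)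

theorem aleph0_le_tWeight (X : Type) [TopologicalSpace X] [T1Space X] [Infinite X] :
    ℵ₀ ≤ tWeight X := by
  obtain ⟨B, hB, hcard⟩ : ∃ B : Set (Set X), TopologicalSpace.IsTopologicalBasis B ∧
      #B = tWeight X :=
    csInf_mem (s := {c | ∃ B : Set (Set X), TopologicalSpace.IsTopologicalBasis B ∧ #B = c})
      ⟨_, ⟨_, TopologicalSpace.isTopologicalBasis_opens, rfl⟩⟩
  rw [← hcard]
  by_contra! hfin
  have : Finite B := lt_aleph0_iff_finite.1 hfin
  -- in a `T1` space a point is determined by the basic sets containing it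
  have hinj : Injective fun x : X => {b : B | x ∈ (b : Set X)} := by
    intro x x' h
    by_contra hne
    obtain ⟨b, hb, hxb, hbx'⟩ :=
      hB.exists_subset_of_mem_open (show x ∈ ({x'}ᶜ : Set X) from hne) isOpen_compl_singleton
    have : (⟨b, hb⟩ : B) ∈ {b : B | x' ∈ (b : Set X)} := by
      simp only at h
      exact h ▸ hxb
    exact hbx' this rfl
  have := Finite.of_injective _ hinj
  exact not_finite X

theorem insert_mem_sFam {X : Type} [TopologicalSpace X] [T2Space X] {R : Set X} {x : X}
    (hR : R.Countable) (hxR : x ∉ R) (hconv : ∀ N ∈ 𝓝 x, (R \ N).Finite) :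
    insert x R ∈ SFam X := by
  by_cases hfin : R.Finite
  · exact Or.inl (hfin.insert x)
  have : Countable R := hR.to_subtype
  have : Infinite R := infinite_coe_iff.2 hfin
  obtain ⟨e⟩ := nonempty_equiv_of_countable (α := ℕ) (β := R)
  let E : OnePoint ℕ → ↥(insert x R) := fun o =>
    o.elim ⟨x, mem_insert _ _⟩ fun n => ⟨e n, mem_insert_of_mem _ (e n).2⟩
  have hE : Bijective E := by
    refine ⟨fun o o' h => ?_, ?_⟩
    · induction o using OnePoint.rec <;> induction o' using OnePoint.rec <;>
        simp only [E, OnePoint.elim_infty, OnePoint.elim_some, Subtype.mk.injEq] at h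
      · rfl
      · exact absurd (h ▸ (e _).2) hxR
      · exact absurd (h ▸ (e _).2) hxR
      · exact congrArg _ (e.injective (Subtype.ext h))
    · rintro ⟨y, rfl | hy⟩
      · exact ⟨OnePoint.infty, rfl⟩
      · exact ⟨(e.symm ⟨y, hy⟩ : ℕ), by simp [E]⟩
  have hval : Tendsto ((↑) : R → X) cofinite (𝓝 x) := fun N hN =>
    ((hconv N hN).preimage Subtype.val_injective.injOn).subset fun r hr => ⟨r.2, hr⟩
  have hEc : Continuous E := by
    rw [OnePoint.continuous_iff_from_discrete]
    exact tendsto_subtype_rng.2 (hval.comp e.injective.tendsto_cofinite)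
  exact Or.inr ⟨(hEc.homeoOfEquivCompactToT2 (f := Equiv.ofBijective E hE)).symm⟩

theorem exists_countable_sFam_not_tendsto {X L : Type} [TopologicalSpace X]
    [FrechetUrysohnSpace X] [T2Space X] [TopologicalSpace L] [CompactSpace L] [T2Space L]
    {f : X → L} {A : Set X} {x : X} (hxA : x ∉ A) (hx : x ∈ closure A)
    (h : ¬∃ a, Tendsto f (𝓝[A] x) (𝓝 a)) :
    ∃ R ⊆ A, R.Countable ∧ insert x R ∈ SFam X ∧ ¬∃ a, Tendsto f (𝓝[R] x) (𝓝 a) := by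
  have := mem_closure_iff_nhdsWithin_neBot.1 hx
  obtain ⟨N₀, N₁, hN₀, hN₁, hdisj, h₀, h₁⟩ := exists_isClosed_disjoint_frequently_of_not_tendsto h
  have hcl : ∀ N, (∃ᶠ t in 𝓝[A] x, f t ∈ N) → x ∈ closure (A ∩ f ⁻¹' N) := fun N hN =>
    mem_closure_iff_frequently.2 ((frequently_nhdsWithin_iff.1 hN).mono fun t ht => ⟨ht.2, ht.1⟩)
  obtain ⟨R₀, hR₀A, hR₀c, hxR₀, hR₀⟩ := exists_countable_subset_finite_diff_nhds (hcl N₀ h₀)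
  obtain ⟨R₁, hR₁A, hR₁c, hxR₁, hR₁⟩ := exists_countable_subset_finite_diff_nhds (hcl N₁ h₁)
  have hRA : R₀ ∪ R₁ ⊆ A :=
    union_subset (hR₀A.trans inter_subset_left) (hR₁A.trans inter_subset_left)
  refine ⟨R₀ ∪ R₁, hRA, hR₀c.union hR₁c,
    insert_mem_sFam (hR₀c.union hR₁c) (fun h => hxA (hRA h)) fun N hN => ?_, ?_⟩
  · rw [union_sdiff_distrib]
    exact (hR₀ N hN).union (hR₁ N hN)
  rintro ⟨a, ha⟩
  -- a limit along `R₀ ∪ R₁` would lie in both `N₀` and `N₁`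
  have hmem : ∀ {R N}, R ⊆ A ∩ f ⁻¹' N → IsClosed N → x ∈ closure R → R ⊆ R₀ ∪ R₁ → a ∈ N :=
    fun hRN hN hxR hR => by
      have := mem_closure_iff_nhdsWithin_neBot.1 hxR
      exact hN.mem_of_tendsto (ha.mono_left (nhdsWithin_mono _ hR))
        (eventually_nhdsWithin_of_forall fun t ht => (hRN ht).2)
  exact hdisj.ne_of_mem (hmem hR₀A hN₀ hxR₀ subset_union_left)
    (hmem hR₁A hN₁ hxR₁ subset_union_right) rfl

theorem Dim.ofOrdinal_le_iff {a b : Ordinal.{0}} : Dim.ofOrdinal a ≤ Dim.ofOrdinal b ↔ a ≤ b := by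
  unfold Dim.ofOrdinal
  exact_mod_cast Iff.rfl

theorem Dim.add_one_le_of_le_of_lt {d : Dim} {β γ : Ordinal.{0}} (h : d ≤ Dim.ofOrdinal β)
    (hβγ : β < γ) : d + 1 ≤ Dim.ofOrdinal γ := by
  calc d + 1 ≤ Dim.ofOrdinal β + 1 := add_le_add_left h 1
    _ = Dim.ofOrdinal (β + 1) := by unfold Dim.ofOrdinal; push_cast; rfl
    _ ≤ Dim.ofOrdinal γ := Dim.ofOrdinal_le_iff.2 (Order.add_one_le_iff.2 hβγ)

section LInd

variable {L : Type} [TopologicalSpace L]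

theorem lindLE_iff {X : Type} [TopologicalSpace X] {α : Ordinal.{0}} :
    LIndLE L X α ↔
      ∀ F : Set X, IsClosed F → ∀ f : C(F, L),
        ∃ U : Set X, IsOpen U ∧ ∃ hFU : F ⊆ U,
          (∃ g : C(U, L), ∀ (x : X) (hx : x ∈ F), g ⟨x, hFU hx⟩ = f ⟨x, hx⟩) ∧
          (Uᶜ = (∅ : Set X) ∨ ∃ β : Set.Iio α, LIndLE L (↥(Uᶜ)) β.1) := by
  unfold LIndLE LIndLeAux
  rw [WellFounded.fix_eq]

theorem LIndLE.of_isClosedEmbedding {A T : Type} [TopologicalSpace A] [TopologicalSpace T]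
    {γ : Ordinal.{0}} {e : A → T} (he : IsClosedEmbedding e) (h : LIndLE L T γ) :
    LIndLE L A γ := by
  induction γ using WellFoundedLT.induction generalizing A T with
  | _ γ IH =>
  rw [lindLE_iff] at h ⊢
  intro F hF f
  have heF : IsEmbedding (e ∘ ((↑) : F → A)) := he.isEmbedding.comp .subtypeVal
  have hclosed : IsClosed (range (e ∘ ((↑) : F → A))) := by
    rw [range_comp, Subtype.range_coe]
    exact he.isClosedMap _ hF
  obtain ⟨U, hU, hFU, ⟨g, hg⟩, hP⟩ :=
    h _ hclosed (f.comp ⟨heF.toHomeomorph.symm, heF.toHomeomorph.symm.continuous⟩)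
  refine ⟨e ⁻¹' U, hU.preimage he.continuous, fun x hx => hFU ⟨⟨x, hx⟩, rfl⟩,
    ⟨g.comp ⟨fun x => ⟨e x, x.2⟩, by fun_prop⟩, fun x hx => ?_⟩, ?_⟩
  · have hsymm : heF.toHomeomorph.symm ⟨e x, ⟨x, hx⟩, rfl⟩ = ⟨x, hx⟩ :=
      heF.toHomeomorph.symm_apply_apply ⟨x, hx⟩
    simpa [hsymm] using hg (e x) ⟨⟨x, hx⟩, rfl⟩
  · rcases hP with hP | ⟨β, hβ⟩
    · exact Or.inl (by rw [← preimage_compl, hP, preimage_empty])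
    · exact Or.inr ⟨β, IH β.1 β.2 (e := Uᶜ.restrictPreimage e) (he.restrictPreimage _) hβ⟩

theorem LIndLE.of_continuous_injective {A T : Type} [TopologicalSpace A] [TopologicalSpace T]
    [CompactSpace A] [T2Space T] {γ : Ordinal.{0}} {e : A → T} (he : Continuous e)
    (hinj : Injective e) (h : LIndLE L T γ) : LIndLE L A γ :=
  h.of_isClosedEmbedding (he.isClosedEmbedding hinj)

theorem exists_lt_lindLE_of_injective_mapsTo {A T : Type} [TopologicalSpace A]
    [TopologicalSpace T] [CompactSpace A] [Nonempty A] [T2Space T] {P : Set T} {γ : Ordinal.{0}}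
    (hP : P = ∅ ∨ ∃ β < γ, LIndLE L ↥P β) {e : A → T} (he : Continuous e) (hinj : Injective e)
    (heP : ∀ a, e a ∈ P) : ∃ β < γ, LIndLE L A β := by
  obtain ⟨a⟩ := ‹Nonempty A›
  obtain ⟨β, hβ, hPβ⟩ := hP.resolve_left (nonempty_of_mem (heP a)).ne_empty
  exact ⟨β, hβ, hPβ.of_continuous_injective (he.subtype_mk heP)
    fun a b h => hinj (congrArg Subtype.val h)⟩

theorem LIndLE.nonempty {T : Type} [TopologicalSpace T] [Nonempty T] {γ : Ordinal.{0}}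
    (h : LIndLE L T γ) : Nonempty L := by
  induction γ using WellFoundedLT.induction generalizing T with
  | _ γ IH =>
  rw [lindLE_iff] at h
  obtain ⟨U, -, -, ⟨g, -⟩, hP⟩ :=
    h ∅ isClosed_empty ⟨fun x => x.2.elim, continuous_of_const fun x => x.2.elim⟩
  rcases U.eq_empty_or_nonempty with rfl | ⟨u, hu⟩
  · rcases hP with hP | ⟨β, hβ⟩
    · exact absurd hP (compl_empty (α := T) ▸ univ_nonempty.ne_empty)
    · obtain ⟨t⟩ := ‹Nonempty T›
      have : Nonempty ↥(∅ᶜ : Set T) := ⟨⟨t, notMem_empty t⟩⟩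
      exact IH β.1 β.2 hβ
  · exact ⟨g ⟨u, hu⟩⟩

/-- The defining property of `LIndLE` for a subspace, restated in the ambient space. -/
theorem LIndLE.exists_partition [Nonempty L] {T : Type} [TopologicalSpace T] {S : Set T}
    {γ : Ordinal.{0}} (h : LIndLE L S γ) {F : Set T} (hFS : F ⊆ S) (hF : IsClosed F)
    {f : T → L} (hf : ContinuousOn f F) :
    ∃ O : Set T, IsOpen O ∧ F ⊆ O ∧ ∃ g : T → L, ContinuousOn g (S ∩ O) ∧ EqOn g f F ∧
      (S \ O = ∅ ∨ ∃ β < γ, LIndLE L ↥(S \ O) β) := by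
  rw [lindLE_iff] at h
  obtain ⟨U₁, hU₁, hFU₁, ⟨g, hg⟩, hP⟩ :=
    h (((↑) : S → T) ⁻¹' F) (hF.preimage continuous_subtype_val)
      ⟨fun x => f x.1.1, hf.comp_continuous (continuous_subtype_val.comp continuous_subtype_val)
        fun x => x.2⟩
  obtain ⟨O, hO, rfl⟩ := isOpen_induced_iff.1 hU₁
  have he : IsEmbedding (((↑) : S → T) ∘ ((↑) : ((↑) ⁻¹' O : Set S) → S)) :=
    IsEmbedding.subtypeVal.comp .subtypeVal
  have hrange : range (((↑) : S → T) ∘ ((↑) : ((↑) ⁻¹' O : Set S) → S)) = S ∩ O := by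
    rw [range_comp, Subtype.range_coe, Subtype.image_preimage_coe]
  refine ⟨O, hO, fun x hx => hFU₁ (show (⟨x, hFS hx⟩ : S) ∈ _ from hx),
    extend _ g fun _ => Classical.arbitrary L, hrange ▸ he.continuousOn_extend g.continuous _,
    fun x hx => (he.injective.extend_apply g _ ⟨⟨x, hFS hx⟩, hFU₁ hx⟩).trans (hg _ hx), ?_⟩
  rcases hP with hP | ⟨β, hβ⟩
  · exact Or.inl (eq_empty_iff_forall_notMem.2 fun x ⟨hxS, hxO⟩ =>
      (eq_empty_iff_forall_notMem.1 hP) ⟨x, hxS⟩ hxO)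
  · let e : ↥(S \ O) ≃ₜ ↥((((↑) : S → T) ⁻¹' O)ᶜ) :=
      { toFun := fun p => ⟨⟨p.1, p.2.1⟩, p.2.2⟩
        invFun := fun q => ⟨q.1.1, q.1.2, q.2⟩
        left_inv := fun _ => rfl
        right_inv := fun _ => rfl
        continuous_toFun := by fun_prop
        continuous_invFun := by fun_prop }
    exact Or.inr ⟨β, β.2, hβ.of_isClosedEmbedding e.isClosedEmbedding⟩

theorem exists_not_extendable_of_not_lindLE_zero [Nonempty L] {X : Type} [TopologicalSpace X]
    {E : Set X} (hE : IsClosed E) (h : ¬LIndLE L E 0) :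
    ∃ F ⊆ E, IsClosed F ∧ ∃ f : X → L, ContinuousOn f F ∧
      ¬∃ g : X → L, ContinuousOn g E ∧ EqOn g f F := by
  contrapose! h
  rw [lindLE_iff]
  intro F' hF' f'
  have he : IsEmbedding (((↑) : E → X) ∘ ((↑) : F' → E)) := IsEmbedding.subtypeVal.comp .subtypeVal
  have hrange : range (((↑) : E → X) ∘ ((↑) : F' → E)) = (↑) '' F' := by
    rw [range_comp, Subtype.range_coe]
  obtain ⟨g, hg, hgf⟩ := h _ (by rintro _ ⟨x, rfl⟩; exact x.1.2)
    (hrange ▸ hE.isClosedMap_subtype_val _ hF') (extend _ f' fun _ => Classical.arbitrary L)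
    (he.continuousOn_extend f'.continuous _)
  refine ⟨univ, isOpen_univ, subset_univ _, ⟨⟨fun x => g x.1.1,
    (continuousOn_iff_continuous_domRestrict.1 hg).comp continuous_subtype_val⟩,
    fun x hx => (hgf ⟨⟨x, hx⟩, rfl⟩).trans (he.injective.extend_apply _ _ _)⟩, Or.inl compl_univ⟩

theorem lind_le_of_lindLE {X : Type} [TopologicalSpace X] [Nonempty X] {β : Ordinal.{0}}
    (h : LIndLE L X β) : LInd L X ≤ Dim.ofOrdinal β := by
  unfold LInd
  rw [if_neg (not_isEmpty_of_nonempty X), if_pos ⟨β, h⟩]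
  exact Dim.ofOrdinal_le_iff.2 (csInf_le' h)

theorem le_lind_of_forall {X : Type} [TopologicalSpace X] [Nonempty X] {d : Dim}
    (H : ∀ γ : Ordinal.{0}, LIndLE L X γ → d ≤ Dim.ofOrdinal γ) : d ≤ LInd L X := by
  unfold LInd
  rw [if_neg (not_isEmpty_of_nonempty X)]
  split_ifs with h
  · exact H _ (csInf_mem h)
  · exact le_top

theorem le_lindPlus {X : Type} [TopologicalSpace X] {b : X} {d : Dim}
    (H : ∀ U : Set X, IsOpen U → b ∈ U → d ≤ LInd L (↥(closure U))) : d ≤ LIndPlus L b :=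
  le_sInf fun _ ⟨U, hU, hbU, hle⟩ => (H U hU hbU).trans hle

theorem lindPlus_le_closure {X : Type} [TopologicalSpace X] {b : X} {d : Dim}
    (h : d ≤ LIndPlus L b) {U : Set X} (hU : IsOpen U) (hbU : b ∈ U) :
    d ≤ LInd L (↥(closure U)) :=
  h.trans (sInf_le ⟨U, hU, hbU, le_rfl⟩)

theorem not_lindLE_zero_of_one_le_lindPlus {T : Type} [TopologicalSpace T] [CompactSpace T]
    [T2Space T] {b : T} (h : Dim.ofOrdinal 1 ≤ LIndPlus L b) {t : Set T} (ht : t ∈ 𝓝 b)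
    (htc : IsClosed t) : ¬LIndLE L t 0 := by
  intro h0
  have hb : b ∈ interior t := mem_interior_iff_mem_nhds.2 ht
  have : CompactSpace ↥(closure (interior t)) :=
    isCompact_iff_compactSpace.1 isClosed_closure.isCompact
  have : Nonempty ↥(closure (interior t)) := ⟨⟨b, subset_closure hb⟩⟩
  have hle := (lindPlus_le_closure h isOpen_interior hb).trans <| lind_le_of_lindLE <|
    h0.of_continuous_injective (continuous_inclusion (htc.closure_subset_iff.2 interior_subset))
      (inclusion_injective _)
  exact zero_lt_one.not_ge (Dim.ofOrdinal_le_iff.1 hle)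

theorem not_lindLE_zero_inter_of_one_le_lindPlus {X : Type} [TopologicalSpace X]
    [CompactSpace X] [T2Space X] {B t : Set X} (hB : IsClosed B) {c : X} (hc : c ∈ B)
    (h : Dim.ofOrdinal 1 ≤ LIndPlus L (⟨c, hc⟩ : B)) (ht : t ∈ 𝓝 c) (htc : IsClosed t) :
    ¬LIndLE L ↥(B ∩ t) 0 := by
  have : CompactSpace B := isCompact_iff_compactSpace.1 hB.isCompact
  have htB : IsClosed (((↑) : B → X) ⁻¹' t) := htc.preimage continuous_subtype_val
  have : CompactSpace ↥(((↑) : B → X) ⁻¹' t) := isCompact_iff_compactSpace.1 htB.isCompact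
  refine fun h0 => not_lindLE_zero_of_one_le_lindPlus h
    (continuous_subtype_val.continuousAt.preimage_mem_nhds ht) htB ?_
  exact h0.of_continuous_injective (e := fun u => ⟨u.1.1, u.1.2, u.2⟩) (by fun_prop)
    fun u v huv => by ext; simpa using congrArg Subtype.val huv

end LInd

section ZSpace

variable {ι X Y : Type} [TopologicalSpace ι] [TopologicalSpace X] [TopologicalSpace Y]

/-- Together with `ZQuotProjX`, these maps separate the points of `N`. -/
def ZQuot.slice (i : ι) : ZQuot ι X Y → Y ⊕ Unit :=
  Quot.lift (fun p => if p.1 = (i : OnePoint ι) then .inl p.2.2 else .inr ())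
    fun _ _ ⟨hp, hq, _⟩ => by simp [hp, hq]

theorem ZQuot.continuous_slice [DiscreteTopology ι] (i : ι) :
    Continuous (ZQuot.slice (X := X) (Y := Y) i) := by
  have hi : IsClopen ({(i : OnePoint ι)} : Set (OnePoint ι)) := ⟨isClosed_singleton,
    by simpa using OnePoint.isOpenEmbedding_coe.isOpenMap _ (isOpen_discrete {i})⟩
  have hfr : frontier {p : OnePoint ι × X × Y | p.1 = i} = ∅ :=
    (hi.preimage continuous_fst).frontier_eq
  exact continuous_quot_lift _ (Continuous.if (by simp [hfr]) (by fun_prop) continuous_const)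

theorem continuous_zQuotProjX : Continuous (ZQuotProjX : ZQuot ι X Y → X) :=
  continuous_quot_lift _ (by fun_prop)

instance [DiscreteTopology ι] [T2Space X] [T2Space Y] : T2Space (ZQuot ι X Y) := by
  refine T2Space.of_injective_continuous
    (f := fun ζ => (ZQuotProjX ζ, fun i => ZQuot.slice i ζ)) ?_
    (continuous_zQuotProjX.prodMk (continuous_pi ZQuot.continuous_slice))
  rintro ⟨a, x, y⟩ ⟨b, x', y'⟩ h
  obtain ⟨hx, h⟩ := Prod.ext_iff.1 h
  obtain rfl : x = x' := hx
  induction a using OnePoint.rec with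
  | infty =>
    induction b using OnePoint.rec with
    | infty => exact Quot.sound ⟨rfl, rfl, rfl⟩
    | coe j => simpa [ZQuot.slice] using congrFun h j
  | coe i =>
    have hi := congrFun h i
    by_cases hb : b = i
    · obtain rfl : y = y' := by simpa [ZQuot.slice, hb] using hi
      rw [hb]
    · simp [ZQuot.slice, hb] at hi

/-- The point `π₁(μ, x, y)` of `H(μ)`. -/
def zmu (φ : ι → Set X) (y : Y) (x : X) : ZSpace ι X Y φ :=
  ⟨Quot.mk _ (OnePoint.infty, x, y), _, rfl, Or.inl rfl⟩

/-- The point `π₁(i, x, y)` of `H(i)`. -/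
def zfibre (φ : ι → Set X) (i : ι) (y : Y) (x : φ i) : ZSpace ι X Y φ :=
  ⟨Quot.mk _ (i, x, y), _, rfl, Or.inr ⟨i, rfl, x.2⟩⟩

variable {φ : ι → Set X}

theorem continuous_zmu (y : Y) : Continuous (zmu φ y) :=
  (continuous_quot_mk.comp (by fun_prop)).subtype_mk _

theorem zmu_injective (y : Y) : Injective (zmu φ y) :=
  LeftInverse.injective (g := ZProjX φ) fun _ => rfl

theorem continuous_zProjX : Continuous (ZProjX φ : ZSpace ι X Y φ → X) :=
  continuous_zQuotProjX.comp continuous_subtype_val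

theorem eq_zmu_of_mem_zHmu {z : ZSpace ι X Y φ} (hz : z ∈ ZHmu ι X Y φ) (y₀ : Y) :
    z = zmu φ y₀ (ZProjX φ z) := by
  obtain ⟨x, y, hxy⟩ := hz
  refine Subtype.ext ?_
  simp only [zmu, ZProjX, hxy]
  exact Quot.sound ⟨rfl, rfl, rfl⟩

theorem continuous_zfibre (i : ι) (y : Y) : Continuous (zfibre φ i y) :=
  (continuous_quot_mk.comp (by fun_prop)).subtype_mk _

theorem continuous_zfibre_left (i : ι) (x : φ i) : Continuous fun y : Y => zfibre φ i y x :=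
  (continuous_quot_mk.comp (by fun_prop)).subtype_mk _

theorem zfibre_injective_left (i : ι) (x : φ i) : Injective fun y : Y => zfibre φ i y x :=
  fun y y' h => by simpa [zfibre, ZQuot.slice] using congrArg (ZQuot.slice i ∘ Subtype.val) h

/-- Tube lemma around the collapsed fibre `π₁({μ} × {x} × Y)`. -/
theorem eventually_cofinite_zfibre_mem [DiscreteTopology ι] [CompactSpace Y]
    {W : Set (ZSpace ι X Y φ)} (hW : IsOpen W) {x : X} {y₀ : Y} (hx : zmu φ y₀ x ∈ W) :
    ∀ᶠ i in cofinite, ∀ (hxi : x ∈ φ i) (y : Y), zfibre φ i y ⟨x, hxi⟩ ∈ W := by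
  obtain ⟨Q, hQ, rfl⟩ := isOpen_induced_iff.1 hW
  have hcont : Continuous fun q : (OnePoint ι × X) × Y =>
      Quot.mk (ZRel ι X Y) (q.1.1, q.1.2, q.2) :=
    continuous_quot_mk.comp (by fun_prop)
  have hall : ∀ᶠ p in 𝓝 ((OnePoint.infty : OnePoint ι), x), ∀ y ∈ (univ : Set Y),
      Quot.mk (ZRel ι X Y) (p.1, p.2, y) ∈ Q := by
    refine isCompact_univ.eventually_forall_of_forall_eventually fun y _ =>
      (hQ.preimage hcont).mem_nhds ?_
    rw [mem_preimage, show Quot.mk (ZRel ι X Y) (OnePoint.infty, x, y) =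
      Quot.mk _ (OnePoint.infty, x, y₀) from Quot.sound ⟨rfl, rfl, rfl⟩]
    exact hx
  have htend : Tendsto (fun i : ι => ((i : OnePoint ι), x)) cofinite
      (𝓝 (OnePoint.infty, x)) := by
    refine (OnePoint.tendsto_coe_infty.mono_left ?_).prodMk_nhds tendsto_const_nhds
    rw [coclosedCompact_eq_cocompact, cocompact_eq_cofinite]
  exact (htend.eventually hall).mono fun i hi hxi y => hi y (mem_univ y)

end ZSpace

section Fibre

variable {ι X Y L : Type} [TopologicalSpace ι] [DiscreteTopology ι] [TopologicalSpace X]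
  [TopologicalSpace Y] {φ : ι → Set X}

theorem exists_index_zfibre_mem_and_eq [MetricSpace L] [T1Space X] [Infinite X] [CompactSpace Y]
    (hφ : ZPhiOK φ) (hw : tWeight X < #ι) (y₀ : Y) {W : Set (ZSpace ι X Y φ)} (hW : IsOpen W)
    {G : ZSpace ι X Y φ → L} (hG : ContinuousOn G W) {S R : Set X} (hS : S ∈ SFam X)
    (hR : R.Countable) (hRW : ∀ x ∈ R, zmu φ y₀ x ∈ W) :
    ∃ i, φ i = S ∧ ∀ x ∈ R, ∀ (hxi : x ∈ φ i) (y : Y),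
      zfibre φ i y ⟨x, hxi⟩ ∈ W ∧ G (zfibre φ i y ⟨x, hxi⟩) = G (zmu φ y₀ x) := by
  have hcard : ℵ₀ < #(φ ⁻¹' {S}) := by
    rw [hφ.2 _ hS]
    exact (aleph0_le_tWeight X).trans_lt hw
  set P : X → ℕ → ι → Prop := fun x n i => ∀ (hxi : x ∈ φ i) (y : Y),
    zfibre φ i y ⟨x, hxi⟩ ∈ W ∩ G ⁻¹' Metric.ball (G (zmu φ y₀ x)) (1 / (n + 1))
  have hgood : ∀ x ∈ R, ∀ n, {i | ¬P x n i}.Finite := fun x hx n =>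
    eventually_cofinite.1 <| eventually_cofinite_zfibre_mem
      (hG.isOpen_inter_preimage hW Metric.isOpen_ball)
      ⟨hRW x hx, Metric.mem_ball_self Nat.one_div_pos_of_nat⟩
  -- uncountably many `i` have `φ i = S`, and only countably many are bad for some `x, n`
  obtain ⟨i, hiS, hi⟩ : ∃ i, φ i = S ∧ ∀ x ∈ R, ∀ n, P x n i := by
    by_contra! h
    refine hcard.not_ge (le_aleph0_iff_set_countable.2 ((hR.biUnion fun x hx =>
      countable_iUnion fun n => (hgood x hx n).countable).mono fun i hi => ?_))
    obtain ⟨x, hx, n, hn⟩ := h i hi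
    exact mem_biUnion hx (mem_iUnion.2 ⟨n, hn⟩)
  refine ⟨i, hiS, fun x hx hxi y => ⟨(hi x hx 0 hxi y).1, eq_of_forall_dist_le fun ε hε => ?_⟩⟩
  obtain ⟨n, hn⟩ := exists_nat_one_div_lt hε
  exact (Metric.mem_ball.1 (hi x hx n hxi y).2).le.trans hn.le

theorem exists_zfibre_mem_closure_diff [MetricSpace L] [T1Space X] [CompactSpace Y]
    (hφ : ZPhiOK φ) (hw : tWeight X < #ι) (y₀ : Y) {W O : Set (ZSpace ι X Y φ)} (hW : IsOpen W)
    (hWO : W ⊆ O) {G : ZSpace ι X Y φ → L} (hG : ContinuousOn G O) {b : X} {R : Set X}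
    (hbR : b ∉ R) (hR : R.Countable) (hS : insert b R ∈ SFam X)
    (hRW : ∀ x ∈ R, zmu φ y₀ x ∈ W) (hlim : ¬∃ a, Tendsto (G ∘ zmu φ y₀) (𝓝[R] b) (𝓝 a)) :
    ∃ i, ∃ hb : b ∈ φ i, ∀ y, zfibre φ i y ⟨b, hb⟩ ∈ closure W \ O := by
  have hbR' : b ∈ closure R := by
    by_contra h
    rw [mem_closure_iff_nhdsWithin_neBot, not_neBot] at h
    exact hlim ⟨G (zmu φ y₀ b), h ▸ tendsto_bot⟩
  have hRinf : R.Infinite := fun hfin => hbR (hfin.isClosed.closure_subset hbR')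
  have : Infinite X := infinite_univ_iff.1 (hRinf.mono (subset_univ R))
  obtain ⟨i, hiS, hi⟩ := exists_index_zfibre_mem_and_eq hφ hw y₀ hW (hG.mono hWO) hS hR hRW
  have hRφ : R ⊆ φ i := hiS ▸ subset_insert b R
  have hb : b ∈ φ i := hiS ▸ mem_insert b R
  refine ⟨i, hb, fun y => ?_⟩
  have hfib (x : R) := hi x x.2 (hRφ x.2) y
  have := mem_closure_iff_comap_neBot.1 hbR'
  have hT : Tendsto (fun x : R => zfibre φ i y ⟨x, hRφ x.2⟩) (comap (↑) (𝓝 b))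
      (𝓝 (zfibre φ i y ⟨b, hb⟩)) :=
    (continuous_zfibre i y).continuousAt.tendsto.comp (tendsto_subtype_rng.2 tendsto_comap)
  refine ⟨mem_closure_of_tendsto hT (Eventually.of_forall fun x => (hfib x).1),
    fun hO => hlim ⟨G (zfibre φ i y ⟨b, hb⟩), ?_⟩⟩
  rw [nhdsWithin, ← subtype_coe_map_comap, tendsto_map'_iff]
  exact Tendsto.congr (fun x => (hfib x).2) <| (hG _ hO).tendsto.comp <|
    tendsto_nhdsWithin_iff.2 ⟨hT, Eventually.of_forall fun x => hWO (hfib x).1⟩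

theorem exists_nbhd_or_fibre_mem_diff [FrechetUrysohnSpace X] [T2Space X] [CompactSpace Y]
    [MetricSpace L] [CompactSpace L] (hφ : ZPhiOK φ) (hw : tWeight X < #ι) (y₀ : Y)
    {U G₁ : Set (ZSpace ι X Y φ)} (hU : IsOpen U) (hG₁ : IsOpen G₁) {G : ZSpace ι X Y φ → L}
    (hG : ContinuousOn G (closure U ∩ G₁)) {E : Set X} (hEU : ∀ x ∈ E, zmu φ y₀ x ∈ U)
    (hext : ¬∃ h : X → L, ContinuousOn h E ∧ EqOn h (G ∘ zmu φ y₀) (E ∩ zmu φ y₀ ⁻¹' G₁)) :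
    (∃ b ∈ E, ∃ N : Set X, IsOpen N ∧ b ∈ N ∧ ∀ x ∈ closure N, zmu φ y₀ x ∈ closure U \ G₁) ∨
      ∃ i b, ∃ hb : b ∈ φ i, ∀ y, zfibre φ i y ⟨b, hb⟩ ∈ closure U \ G₁ := by
  set V₁ := zmu φ y₀ ⁻¹' (U ∩ G₁)
  have hGe : ContinuousOn (G ∘ zmu φ y₀) V₁ :=
    hG.comp (continuous_zmu y₀).continuousOn fun x hx => ⟨subset_closure hx.1, hx.2⟩
  by_cases hE : E ⊆ closure V₁
  · obtain ⟨x, hxE, hx⟩ : ∃ x ∈ E, ¬∃ a, Tendsto (G ∘ zmu φ y₀) (𝓝[V₁] x) (𝓝 a) := by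
      by_contra! h
      exact hext ⟨extendFrom V₁ (G ∘ zmu φ y₀), continuousOn_extendFrom hE h,
        fun x hx => extendFrom_extends hGe x ⟨hEU x hx.1, hx.2⟩⟩
    have hxV₁ : x ∉ V₁ := fun h => hx ⟨_, hGe x h⟩
    obtain ⟨R, hRV₁, hRc, hS, hR⟩ := exists_countable_sFam_not_tendsto hxV₁ (hE hxE) hx
    obtain ⟨i, hb, hi⟩ := exists_zfibre_mem_closure_diff hφ hw y₀ (hU.inter hG₁)
      (inter_subset_inter_left _ subset_closure) hG (fun h => hxV₁ (hRV₁ h)) hRc hS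
      (fun x hx => hRV₁ hx) hR
    have hcl : closure (U ∩ G₁) ⊆ closure U := closure_mono inter_subset_left
    exact Or.inr ⟨i, x, hb, fun y => ⟨hcl (hi y).1, fun h => (hi y).2 ⟨hcl (hi y).1, h⟩⟩⟩
  · obtain ⟨b, hbE, hb⟩ := not_subset.1 hE
    refine Or.inl ⟨b, hbE, zmu φ y₀ ⁻¹' U \ closure V₁,
      (hU.preimage (continuous_zmu y₀)).sdiff isClosed_closure, ⟨hEU b hbE, hb⟩,
      fun x hx => ⟨map_mem_closure (continuous_zmu y₀) hx fun y hy => hy.1, fun hxG => ?_⟩⟩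
    obtain ⟨y, hyG, hyU, hyV₁⟩ := mem_closure_iff.1 hx _ (hG₁.preimage (continuous_zmu y₀)) hxG
    exact hyV₁ (subset_closure ⟨hyU, hyG⟩)

theorem exists_lt_lindLE_of_lindLE_closure [CompactSpace X] [T2Space X] [FrechetUrysohnSpace X]
    [CompactSpace Y] [T2Space Y] [MetricSpace L] [CompactSpace L] [Nonempty L] (hφ : ZPhiOK φ)
    (hw : tWeight X < #ι) (y₀ : Y) {U : Set (ZSpace ι X Y φ)} (hU : IsOpen U) {γ : Ordinal.{0}}
    (hγ : LIndLE L ↥(closure U) γ) {E F : Set X} (hEU : ∀ x ∈ E, zmu φ y₀ x ∈ U) (hFE : F ⊆ E)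
    (hF : IsClosed F) {f : X → L} (hf : ContinuousOn f F)
    (hno : ¬∃ g : X → L, ContinuousOn g E ∧ EqOn g f F) :
    ∃ β < γ, (∃ b ∈ E, ∃ N : Set X, IsOpen N ∧ b ∈ N ∧ LIndLE L ↥(closure N) β) ∨
      LIndLE L Y β := by
  obtain ⟨G₁, hG₁, hFG₁, G, hG, hGf, hP⟩ := hγ.exists_partition (F := zmu φ y₀ '' F)
    (image_subset_iff.2 fun x hx => subset_closure (hEU x (hFE hx)))
    (hF.isCompact.image (continuous_zmu y₀)).isClosed (f := f ∘ ZProjX φ)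
    (hf.comp continuous_zProjX.continuousOn fun _ ⟨x, hx, hxe⟩ => hxe ▸ hx)
  have hext : ¬∃ h : X → L, ContinuousOn h E ∧ EqOn h (G ∘ zmu φ y₀) (E ∩ zmu φ y₀ ⁻¹' G₁) :=
    fun ⟨h, hh, hhG⟩ => hno ⟨h, hh, fun x hx =>
      (hhG ⟨hFE hx, hFG₁ (mem_image_of_mem _ hx)⟩).trans (hGf (mem_image_of_mem _ hx))⟩
  rcases exists_nbhd_or_fibre_mem_diff hφ hw y₀ hU hG₁ hG hEU hext with
    ⟨b, hbE, N, hN, hbN, hNP⟩ | ⟨i, b, hb, hYP⟩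
  · have : CompactSpace ↥(closure N) := isCompact_iff_compactSpace.1 isClosed_closure.isCompact
    have : Nonempty ↥(closure N) := ⟨⟨b, subset_closure hbN⟩⟩
    obtain ⟨β, hβ, hNβ⟩ := exists_lt_lindLE_of_injective_mapsTo hP
      ((continuous_zmu y₀).comp continuous_subtype_val)
      ((zmu_injective y₀).comp Subtype.val_injective) fun x => hNP x.1 x.2
    exact ⟨β, hβ, Or.inl ⟨b, hbE, N, hN, hbN, hNβ⟩⟩
  · have : Nonempty Y := ⟨y₀⟩
    obtain ⟨β, hβ, hYβ⟩ := exists_lt_lindLE_of_injective_mapsTo hP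
      (continuous_zfibre_left i ⟨b, hb⟩) (zfibre_injective_left i ⟨b, hb⟩) hYP
    exact ⟨β, hβ, Or.inr hYβ⟩

end Fibre

theorem statement11_general (L : Type) [MetricSpace L] [CompactSpace L]
    (X Y : Type) [TopologicalSpace X] [TopologicalSpace Y]
    [CompactSpace X] [CompactSpace Y] [T2Space X] [T2Space Y] [Nonempty Y]
    [FrechetUrysohnSpace X]
    (ι : Type) [TopologicalSpace ι] [DiscreteTopology ι]
    (hι : ZCardOK X Y ι) (φ : ι → Set X) (hφ : ZPhiOK φ)
    (B : Set X) (hB : IsClosed B)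
    (z : ZSpace ι X Y φ) (hz : z ∈ ZHmu ι X Y φ)
    (hc : ZProjX φ z ∈ B)
    (hc1 : Dim.ofOrdinal 1 ≤ LIndPlus L (⟨ZProjX φ z, hc⟩ : ↥B))
    (α : Ordinal.{0}) (hα : ∀ b ∈ B, Dim.ofOrdinal α ≤ LIndPlus L b) :
    min (Dim.ofOrdinal α) (LInd L Y) + 1 ≤ LIndPlus L z := by
  obtain ⟨y₀⟩ := ‹Nonempty Y›
  have hzc : z = zmu φ y₀ (ZProjX φ z) := eq_zmu_of_mem_zHmu hz y₀
  refine le_lindPlus fun U hU hzU => ?_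
  have : Nonempty ↥(closure U) := ⟨⟨z, subset_closure hzU⟩⟩
  refine le_lind_of_forall fun γ hγ => ?_
  have := hγ.nonempty
  obtain ⟨t, ht, htc, htU⟩ := exists_mem_nhds_isClosed_subset <|
    (hU.preimage (continuous_zmu y₀)).mem_nhds (show zmu φ y₀ (ZProjX φ z) ∈ U from hzc ▸ hzU)
  obtain ⟨F, hFE, hF, f, hf, hno⟩ := exists_not_extendable_of_not_lindLE_zero (hB.inter htc)
    (not_lindLE_zero_inter_of_one_le_lindPlus hB hc hc1 ht htc)
  obtain ⟨β, hβγ, hβ⟩ := exists_lt_lindLE_of_lindLE_closure hφ hι.2.1 y₀ hU hγ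
    (fun x hx => htU hx.2) hFE hF hf hno
  refine Dim.add_one_le_of_le_of_lt ?_ hβγ
  rcases hβ with ⟨b, hbE, N, hN, hbN, hNβ⟩ | hYβ
  · have : Nonempty ↥(closure N) := ⟨⟨b, subset_closure hbN⟩⟩
    exact (min_le_left _ _).trans <|
      (lindPlus_le_closure (hα b hbE.1) hN hbN).trans (lind_le_of_lindLE hNβ)
  · exact (min_le_right _ _).trans (lind_le_of_lindLE hYβ)

theorem statement11 (L : Type) [MetricSpace L] [CompactSpace L]
    (hANR : IsANR L) (hL : ¬ContractibleSpace L)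
    (X Y : Type) [TopologicalSpace X] [TopologicalSpace Y]
    [CompactSpace X] [CompactSpace Y] [T2Space X] [T2Space Y] [Nonempty X] [Nonempty Y]
    [FrechetUrysohnSpace X]
    (ι : Type) [TopologicalSpace ι] [DiscreteTopology ι]
    (hι : ZCardOK X Y ι) (φ : ι → Set X) (hφ : ZPhiOK φ)
    (B : Set X) (hB : IsClosed B)
    (z : ZSpace ι X Y φ) (hz : z ∈ ZHmu ι X Y φ)
    (hc : ZProjX φ z ∈ B)
    (hc1 : Dim.ofOrdinal 1 ≤ LIndPlus L (⟨ZProjX φ z, hc⟩ : ↥B))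
    (α : Ordinal.{0}) (hα : ∀ b ∈ B, Dim.ofOrdinal α ≤ LIndPlus L b) :
    min (Dim.ofOrdinal α) (LInd L Y) + 1 ≤ LIndPlus L z :=
  statement11_general L X Y ι hι φ hφ B hB z hz hc hc1 α hα

end
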